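/- arXiv:2501.14565 — 6 statements merged into one kernel-verified Lean document; each statement's English description precedes it below -/
import Mathlib

section
/- Let (Ω, F, P) be a probability space and let X and Y be essentially bounded real-valued random variables. Then essinf X ≤ essinf Y if and only if for every t ∈ ℝ one has esssup((t − X)₊) ≥ esssup((t − Y)₊). -/
/-!
Since `x ↦ (t - x)₊` is continuous and antitone, it carries the essential infimum to the
essential supremum: `esssup (t - Z)₊ = (t - essinf Z)₊`. The claim thus reduces to comparing the
functions `t ↦ (t - b)₊` and `t ↦ (t - a)₊` on `ℝ`, which is decided at `t = a`.
-/

open MeasureTheory Filter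

theorem MeasureTheory.MemLp.isBoundedUnder_abs_le_ae {Ω : Type*} [MeasurableSpace Ω]
    {μ : Measure Ω} {Z : Ω → ℝ} (hZ : MemLp Z ⊤ μ) :
    IsBoundedUnder (· ≤ ·) (ae μ) fun ω ↦ |Z ω| := by
  have hZ_top : eLpNormEssSup Z μ < ⊤ := eLpNorm_exponent_top (f := Z) ▸ hZ.eLpNorm_lt_top
  obtain ⟨C, hC⟩ := eLpNormEssSup_lt_top_iff_isBoundedUnder.1 hZ_top
  exact ⟨C, eventually_map.2 <| (eventually_map.1 hC).mono fun ω hω ↦ by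
    simpa [← Real.norm_eq_abs, ← coe_nnnorm] using (NNReal.coe_le_coe.2 hω)⟩

theorem Antitone.essSup_comp_eq {Ω R S : Type*} [MeasurableSpace Ω] {μ : Measure Ω} [NeZero μ]
    [ConditionallyCompleteLinearOrder R] [TopologicalSpace R] [OrderTopology R]
    [ConditionallyCompleteLinearOrder S] [TopologicalSpace S] [OrderTopology S]
    {f : R → S} (hf : Antitone f) (hf_cont : Continuous f) {Z : Ω → R}
    (hZ_le : IsBoundedUnder (· ≤ ·) (ae μ) Z) (hZ_ge : IsBoundedUnder (· ≥ ·) (ae μ) Z) :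
    essSup (f ∘ Z) μ = f (essInf Z μ) :=
  (hf.map_liminf_of_continuousAt Z hf_cont.continuousAt hZ_le.isCoboundedUnder_ge hZ_ge).symm

theorem essSup_max_sub_zero_eq {Ω : Type*} [MeasurableSpace Ω] {μ : Measure Ω} [NeZero μ]
    {Z : Ω → ℝ} (hZ : MemLp Z ⊤ μ) (t : ℝ) :
    essSup (fun ω ↦ max (t - Z ω) 0) μ = max (t - essInf Z μ) 0 := by
  have hZ_bdd := isBoundedUnder_le_abs.1 hZ.isBoundedUnder_abs_le_ae
  have h_anti : Antitone fun x : ℝ ↦ max (t - x) 0 := fun x y hxy ↦ max_le_max (by linarith) le_rfl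
  exact h_anti.essSup_comp_eq (by fun_prop) hZ_bdd.1 hZ_bdd.2

theorem forall_max_sub_le_max_sub_iff {a b : ℝ} :
    (∀ t : ℝ, max (t - b) 0 ≤ max (t - a) 0) ↔ a ≤ b := by
  refine ⟨fun h ↦ ?_, fun hab t ↦ max_le_max (by linarith) le_rfl⟩
  by_contra! hba
  have := h a
  rw [sub_self, max_self, max_eq_left (by linarith)] at this
  linarith

/-- For essentially bounded random variables `X, Y`,
`essinf X ≤ essinf Y` iff `esssup (t − X)₊ ≥ esssup (t − Y)₊` for every `t ∈ ℝ`. -/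
theorem stmt2 {Ω : Type*} [MeasurableSpace Ω] (μ : Measure Ω) [IsProbabilityMeasure μ]
    (X Y : Ω → ℝ) (hX : MemLp X ⊤ μ) (hY : MemLp Y ⊤ μ) :
    essInf X μ ≤ essInf Y μ ↔
      ∀ t : ℝ, essSup (fun ω => max (t - Y ω) 0) μ ≤ essSup (fun ω => max (t - X ω) 0) μ := by
  simp only [essSup_max_sub_zero_eq hX, essSup_max_sub_zero_eq hY, forall_max_sub_le_max_sub_iff]
end

section
/- Let (Ω, F, P) be a probability space, let 0 < q ≤ q′ be real numbers, and let X and Y be real-valued random variables with E[((−X)₊)^{q′}] < ∞ and E[((−Y)₊)^{q′}] < ∞. If E[((t − X)₊)^q] ≥ E[((t − Y)₊)^q] for every t ∈ ℝ, then E[((t − X)₊)^{q′}] ≥ E[((t − Y)₊)^{q′}] for every t ∈ ℝ. (Equivalently, stochastic dominance of order p implies stochastic dominance of order p′ for all real 1 < p ≤ p′, where the order-p relation is defined via the exponent q = p − 1.) -/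
/-!
For `a = q' - q - 1 > -1` the Beta integral gives, for every real `x`,
`B(q + 1, a + 1) * (t - x)₊ ^ q' = ∫_{s < t} (t - s) ^ a * (s - x)₊ ^ q ds`.
Taking expectations and exchanging the integrals (Tonelli) writes the order-`q'` lower partial
moment at `t` as a positive mixture of the order-`q` lower partial moments at the levels `s < t`,
so the order-`q` inequality at every level passes to order `q'`.
-/

open MeasureTheory Set

namespace StochasticDominance

/-- The Beta function value `B(q + 1, a + 1)`. -/
noncomputable def betaIntegral (a q : ℝ) : ℝ := ∫ v in (0 : ℝ)..1, (1 - v) ^ a * v ^ q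

lemma intervalIntegrable_sub_rpow_mul_sub_rpow {a q : ℝ} (ha : -1 < a) (hq : 0 ≤ q) (x t : ℝ) :
    IntervalIntegrable (fun s => (t - s) ^ a * (s - x) ^ q) volume x t := by
  have hsing : IntervalIntegrable (fun s => (t - s) ^ a) volume x t := by
    simpa using ((intervalIntegral.intervalIntegrable_rpow' (a := 0) (b := t - x) ha).comp_sub_left
      t).symm
  exact hsing.mul_continuousOn (by fun_prop (disch := exact hq))

lemma betaIntegral_pos {a q : ℝ} (ha : -1 < a) (hq : 0 ≤ q) : 0 < betaIntegral a q := by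
  have hint := intervalIntegrable_sub_rpow_mul_sub_rpow ha hq 0 1
  simp only [sub_zero] at hint
  refine intervalIntegral.intervalIntegral_pos_of_pos_on hint (fun v hv => ?_) one_pos
  exact mul_pos (Real.rpow_pos_of_pos (by linarith [hv.2]) a) (Real.rpow_pos_of_pos hv.1 q)

lemma integral_sub_rpow_mul_sub_rpow (a q : ℝ) {x t : ℝ} (hxt : x < t) :
    ∫ s in x..t, (t - s) ^ a * (s - x) ^ q = (t - x) ^ (a + q + 1) * betaIntegral a q := by
  set r := t - x
  have hr : 0 < r := sub_pos.mpr hxt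
  have hsubst := intervalIntegral.integral_comp_mul_add (a := 0) (b := 1)
    (fun s => (t - s) ^ a * (s - x) ^ q) hr.ne' x
  have hscale : ∀ v ∈ uIcc (0 : ℝ) 1,
      (t - (r * v + x)) ^ a * (r * v + x - x) ^ q = r ^ a * r ^ q * ((1 - v) ^ a * v ^ q) := by
    intro v hv
    rw [uIcc_of_le zero_le_one] at hv
    rw [show t - (r * v + x) = r * (1 - v) by ring, add_sub_cancel_right,
      Real.mul_rpow hr.le (by linarith [hv.2]), Real.mul_rpow hr.le hv.1]
    ring
  rw [intervalIntegral.integral_congr hscale, intervalIntegral.integral_const_mul, mul_zero,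
    zero_add, mul_one, show r + x = t by ring, smul_eq_mul] at hsubst
  rw [eq_inv_mul_iff_mul_eq₀ hr.ne'] at hsubst
  rw [← hsubst, Real.rpow_add_one hr.ne', Real.rpow_add hr, betaIntegral]
  ring

lemma lintegral_Iio_rpow_mul_posPart_rpow {a q : ℝ} (ha : -1 < a) (hq : 0 < q) (t x : ℝ) :
    ∫⁻ s in Iio t, ENNReal.ofReal ((t - s) ^ a) * ENNReal.ofReal (max (s - x) 0 ^ q)
      = ENNReal.ofReal (betaIntegral a q) * ENNReal.ofReal (max (t - x) 0 ^ (a + q + 1)) := by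
  have hind : (fun s => ENNReal.ofReal ((t - s) ^ a) * ENNReal.ofReal (max (s - x) 0 ^ q))
      = (Ioi x).indicator fun s => ENNReal.ofReal ((t - s) ^ a * (s - x) ^ q) := by
    ext s
    rcases le_or_gt s x with hsx | hsx
    · simp [indicator_of_notMem (show s ∉ Ioi x from not_lt.2 hsx),
        max_eq_right (sub_nonpos.2 hsx), Real.zero_rpow hq.ne']
    · rw [indicator_of_mem (show s ∈ Ioi x from hsx), max_eq_left (sub_pos.2 hsx).le,
        ENNReal.ofReal_mul' (Real.rpow_nonneg (sub_pos.2 hsx).le q)]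
  rw [hind, setLIntegral_indicator measurableSet_Ioi, Ioi_inter_Iio]
  rcases le_or_gt t x with htx | hxt
  · simp [Ioo_eq_empty (not_lt.2 htx), max_eq_right (sub_nonpos.2 htx),
      Real.zero_rpow (by linarith : a + q + 1 ≠ 0)]
  have hint := (intervalIntegrable_iff_integrableOn_Ioo_of_le hxt.le).1
    (intervalIntegrable_sub_rpow_mul_sub_rpow ha hq.le x t)
  have hnonneg : 0 ≤ᵐ[volume.restrict (Ioo x t)] fun s => (t - s) ^ a * (s - x) ^ q := by
    filter_upwards [self_mem_ae_restrict measurableSet_Ioo] with s hs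
    exact mul_nonneg (Real.rpow_nonneg (by linarith [hs.2]) _)
      (Real.rpow_nonneg (by linarith [hs.1]) _)
  rw [← ofReal_integral_eq_lintegral_ofReal hint hnonneg, ← integral_Ioc_eq_integral_Ioo,
    ← intervalIntegral.integral_of_le hxt.le, integral_sub_rpow_mul_sub_rpow a q hxt,
    max_eq_left (sub_pos.2 hxt).le, mul_comm, ENNReal.ofReal_mul (betaIntegral_pos ha hq.le).le]

variable {Ω : Type*} [MeasurableSpace Ω] {μ : Measure Ω}

lemma ofReal_betaIntegral_mul_lintegral_posPart_rpow [SFinite μ] {a q : ℝ} (ha : -1 < a)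
    (hq : 0 < q) {Z : Ω → ℝ} (hZ : Measurable Z) (t : ℝ) :
    ENNReal.ofReal (betaIntegral a q) * ∫⁻ ω, ENNReal.ofReal (max (t - Z ω) 0 ^ (a + q + 1)) ∂μ
      = ∫⁻ s in Iio t, ENNReal.ofReal ((t - s) ^ a)
          * ∫⁻ ω, ENNReal.ofReal (max (s - Z ω) 0 ^ q) ∂μ := by
  rw [← lintegral_const_mul' _ _ ENNReal.ofReal_ne_top]
  simp_rw [← lintegral_Iio_rpow_mul_posPart_rpow ha hq,
    ← lintegral_const_mul' _ _ ENNReal.ofReal_ne_top]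
  refine lintegral_lintegral_swap (Measurable.aemeasurable ?_)
  exact (measurable_const.sub measurable_snd).pow_const _ |>.ennreal_ofReal |>.mul
    ((measurable_snd.sub (hZ.comp measurable_fst)).max measurable_const |>.pow_const _
      |>.ennreal_ofReal)

lemma integrable_posPart_sub_rpow [IsFiniteMeasure μ] {Z : Ω → ℝ} (hZ : Measurable Z) {p r : ℝ}
    (hp : 0 < p) (hpr : p ≤ r) (hZr : Integrable (fun ω => max (-Z ω) 0 ^ r) μ) (s : ℝ) :
    Integrable (fun ω => max (s - Z ω) 0 ^ p) μ := by
  have hr : 0 < r := hp.trans_le hpr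
  have hmeas : ∀ c : ℝ, AEStronglyMeasurable (fun ω => max (c - Z ω) 0) μ := fun c =>
    ((measurable_const.sub hZ).max measurable_const).aestronglyMeasurable
  have hneg : MemLp (fun ω => max (0 - Z ω) 0) (ENNReal.ofReal r) μ := by
    rw [← integrable_norm_rpow_iff (hmeas 0) (by simpa using hr) ENNReal.ofReal_ne_top,
      ENNReal.toReal_ofReal hr.le]
    simpa [abs_of_nonneg (le_max_right _ (0 : ℝ))] using hZr
  have hshift : MemLp (fun ω => max (s - Z ω) 0) (ENNReal.ofReal r) μ := by
    refine ((memLp_const |s|).add hneg).mono (hmeas s) (ae_of_all _ fun ω => ?_)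
    simp only [Real.norm_eq_abs, Pi.add_apply]
    rw [abs_of_nonneg (le_max_right _ _), abs_of_nonneg (by positivity)]
    exact max_le (by linarith [le_abs_self s, le_max_left (0 - Z ω) 0]) (by positivity)
  have := (hshift.mono_exponent (ENNReal.ofReal_le_ofReal hpr)).integrable_norm_rpow
    (by simpa using hp) ENNReal.ofReal_ne_top
  simpa [abs_of_nonneg (le_max_right _ (0 : ℝ)), ENNReal.toReal_ofReal hp.le] using this

lemma lintegral_posPart_sub_rpow {Z : Ω → ℝ} {s p : ℝ}
    (hZ : Integrable (fun ω => max (s - Z ω) 0 ^ p) μ) :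
    ∫⁻ ω, ENNReal.ofReal (max (s - Z ω) 0 ^ p) ∂μ = ENNReal.ofReal (∫ ω, max (s - Z ω) 0 ^ p ∂μ) :=
  (ofReal_integral_eq_lintegral_ofReal hZ (ae_of_all _ fun _ => by positivity)).symm

end StochasticDominance

open StochasticDominance

/-- Stochastic dominance of order `p` implies stochastic dominance of order `p' ≥ p`:
if `E[((t−X)₊)^q] ≥ E[((t−Y)₊)^q]` for all `t`, with `0 < q ≤ q'` and finite `q'`-th
lower moments, then `E[((t−X)₊)^{q'}] ≥ E[((t−Y)₊)^{q'}]` for all `t`. -/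
theorem stmt4 {Ω : Type*} [MeasurableSpace Ω] (μ : Measure Ω) [IsProbabilityMeasure μ]
    (q q' : ℝ) (hq : 0 < q) (hqq' : q ≤ q')
    (X Y : Ω → ℝ) (hXm : Measurable X) (hYm : Measurable Y)
    (hX : Integrable (fun ω => max (-X ω) 0 ^ q') μ)
    (hY : Integrable (fun ω => max (-Y ω) 0 ^ q') μ)
    (h : ∀ t : ℝ, ∫ ω, max (t - Y ω) 0 ^ q ∂μ ≤ ∫ ω, max (t - X ω) 0 ^ q ∂μ) :
    ∀ t : ℝ, ∫ ω, max (t - Y ω) 0 ^ q' ∂μ ≤ ∫ ω, max (t - X ω) 0 ^ q' ∂μ := by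
  intro t
  rcases hqq'.eq_or_lt with rfl | hlt
  · exact h t
  set a := q' - q - 1
  have ha : -1 < a := by linarith
  have haq : a + q + 1 = q' := by ring
  have hlower : ∀ s, ∫⁻ ω, ENNReal.ofReal (max (s - Y ω) 0 ^ q) ∂μ
      ≤ ∫⁻ ω, ENNReal.ofReal (max (s - X ω) 0 ^ q) ∂μ := fun s => by
    rw [lintegral_posPart_sub_rpow (integrable_posPart_sub_rpow hYm hq hqq' hY s),
      lintegral_posPart_sub_rpow (integrable_posPart_sub_rpow hXm hq hqq' hX s)]
    exact ENNReal.ofReal_le_ofReal (h s)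
  have hB : ENNReal.ofReal (betaIntegral a q) * ∫⁻ ω, ENNReal.ofReal (max (t - Y ω) 0 ^ q') ∂μ
      ≤ ENNReal.ofReal (betaIntegral a q) * ∫⁻ ω, ENNReal.ofReal (max (t - X ω) 0 ^ q') ∂μ := by
    rw [← haq, ofReal_betaIntegral_mul_lintegral_posPart_rpow ha hq hYm,
      ofReal_betaIntegral_mul_lintegral_posPart_rpow ha hq hXm]
    exact lintegral_mono fun s => mul_le_mul' le_rfl (hlower s)
  rw [ENNReal.mul_le_mul_iff_right (by simpa using betaIntegral_pos ha hq.le) ENNReal.ofReal_ne_top,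
    lintegral_posPart_sub_rpow (integrable_posPart_sub_rpow hYm (hq.trans hlt) le_rfl hY t),
    lintegral_posPart_sub_rpow (integrable_posPart_sub_rpow hXm (hq.trans hlt) le_rfl hX t)] at hB
  exact (ENNReal.ofReal_le_ofReal_iff (integral_nonneg fun _ => by positivity)).1 hB
end

section
/- Let (Ω, F, P) be a probability space, let k ≥ 2 be an integer, and let X be a real-valued random variable with E[((−X)₊)^{k−1}] < ∞. Define F_X^{(1)}(t) := P(X ≤ t) and, recursively, F_X^{(j)}(t) := ∫_{−∞}^t F_X^{(j−1)}(y) dy for j ≥ 2. Then for every t ∈ ℝ, F_X^{(k)}(t) = E[((t − X)₊)^{k−1}] / (k−1)!. Consequently, for random variables X and Y with finite (k−1)-st lower moments, F_X^{(k)}(t) ≥ F_Y^{(k)}(t) for all t ∈ ℝ if and only if ‖(t − X)₊‖_{k−1} ≥ ‖(t − Y)₊‖_{k−1} for all t ∈ ℝ. -/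
/-!
With the truncated powers `truncPow m x = x₊ ^ m / m!`, where `truncPow 0` is the Heaviside step
`𝟙[0 ≤ x]`, one has `∫_{-∞}^t truncPow m (y - a) dy = truncPow (m + 1) (t - a)`. Together with
Tonelli's theorem this gives `F_X^{(m+1)}(t) = E[truncPow m (t - X)]` by induction on `m`, starting
from `P(X ≤ t) = E[𝟙[X ≤ t]]`; the moment assumption propagates to all lower orders because
`truncPow m ≤ 1 + (m + 1) truncPow (m + 1)`. Comparing repeated integrals is then comparing
`E[((t - X)₊)^{k-1}]`, and `u ↦ u^{1/(k-1)}` is increasing.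
-/

open MeasureTheory

/-- The `p`-norm `‖Z‖_p = (E[|Z|^p])^{1/p}` of a real-valued random variable. -/
noncomputable def pnorm {Ω : Type*} [MeasurableSpace Ω] (μ : Measure Ω) (p : ℝ)
    (Z : Ω → ℝ) : ℝ :=
  (∫ ω, |Z ω| ^ p ∂μ) ^ (1 / p)

/-- The repeated integrals of the distribution function:
`F_X^{(1)}(t) = P(X ≤ t)` and `F_X^{(j)}(t) = ∫_{−∞}^t F_X^{(j−1)}(y) dy` for `j ≥ 2`. -/
noncomputable def repInt {Ω : Type*} [MeasurableSpace Ω] (μ : Measure Ω) (X : Ω → ℝ) :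
    ℕ → ℝ → ℝ
  | 0 => fun _ => 0
  | 1 => fun t => (μ {ω | X ω ≤ t}).toReal
  | (j + 2) => fun t => ∫ y in Set.Iic t, repInt μ X (j + 1) y

open Set
open scoped Nat

noncomputable def truncPow (m : ℕ) (x : ℝ) : ℝ := if 0 ≤ x then x ^ m / m ! else 0

lemma truncPow_nonneg (m : ℕ) (x : ℝ) : 0 ≤ truncPow m x := by
  unfold truncPow; split_ifs with hx
  · positivity
  · rfl

lemma measurable_truncPow (m : ℕ) : Measurable (truncPow m) :=
  Measurable.ite measurableSet_Ici (by fun_prop) measurable_const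

lemma truncPow_zero (x : ℝ) : truncPow 0 x = if 0 ≤ x then 1 else 0 := by
  simp [truncPow]

lemma truncPow_eq_max_pow_div {m : ℕ} (hm : m ≠ 0) (x : ℝ) :
    truncPow m x = max x 0 ^ m / m ! := by
  unfold truncPow; split_ifs with hx
  · rw [max_eq_left hx]
  · rw [max_eq_right (not_le.1 hx).le, zero_pow hm, zero_div]

lemma truncPow_le_one_add (m : ℕ) (x : ℝ) :
    truncPow m x ≤ 1 + (m + 1) * truncPow (m + 1) x := by
  unfold truncPow; split_ifs with hx
  · have hpow : x ^ m ≤ 1 + x ^ (m + 1) := by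
      rcases le_total x 1 with h1 | h1
      · linarith [pow_le_one₀ hx h1 (n := m), pow_nonneg hx (m + 1)]
      · linarith [pow_le_pow_right₀ h1 (Nat.le_add_right m 1)]
    have hfact : (1 : ℝ) ≤ m ! := by exact_mod_cast m.factorial_pos
    have hsucc : ((m : ℝ) + 1) * (x ^ (m + 1) / (m + 1)!) = x ^ (m + 1) / m ! := by
      rw [Nat.factorial_succ]; push_cast; field_simp
    rw [hsucc, div_le_iff₀ (by positivity), add_mul, one_mul, div_mul_cancel₀ _ (by positivity)]
    linarith
  · norm_num

lemma lintegral_Iic_truncPow_sub (m : ℕ) (a t : ℝ) :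
    ∫⁻ y in Iic t, ENNReal.ofReal (truncPow m (y - a)) =
      ENNReal.ofReal (truncPow (m + 1) (t - a)) := by
  have hind : (fun y => ENNReal.ofReal (truncPow m (y - a))) =
      (Ici a).indicator fun y => ENNReal.ofReal ((y - a) ^ m / m !) := by
    ext y
    simp only [truncPow, indicator, mem_Ici, sub_nonneg]
    split_ifs <;> simp
  rw [hind, lintegral_indicator measurableSet_Ici, Measure.restrict_restrict measurableSet_Ici,
    Ici_inter_Iic]
  rcases le_or_gt a t with hat | hta
  · have hcont : Continuous fun y : ℝ => (y - a) ^ m / m ! := by fun_prop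
    rw [← ofReal_integral_eq_lintegral_ofReal (hcont.integrableOn_Icc)
      ((ae_restrict_iff' measurableSet_Icc).2 (ae_of_all _ fun y hy => ?_))]
    · rw [integral_Icc_eq_integral_Ioc, ← intervalIntegral.integral_of_le hat,
        intervalIntegral.integral_div, intervalIntegral.integral_comp_sub_right (· ^ m),
        integral_pow, truncPow, if_pos (sub_nonneg.2 hat), sub_self, zero_pow m.succ_ne_zero,
        sub_zero, div_div, Nat.factorial_succ]
      push_cast
      ring
    · have : 0 ≤ y - a := sub_nonneg.2 hy.1
      simp only [Pi.zero_apply]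
      positivity
  · rw [Icc_eq_empty hta.not_ge, Measure.restrict_empty, lintegral_zero_measure, truncPow,
      if_neg (by linarith), ENNReal.ofReal_zero]

lemma integrable_truncPow_of_succ {Ω : Type*} [MeasurableSpace Ω] {μ : Measure Ω}
    [IsFiniteMeasure μ] {f : Ω → ℝ} (hf : AEMeasurable f μ) {m : ℕ}
    (h : Integrable (fun ω => truncPow (m + 1) (f ω)) μ) :
    Integrable (fun ω => truncPow m (f ω)) μ :=
  ((integrable_const 1).add (h.const_mul (m + 1))).mono'
    ((measurable_truncPow m).comp_aemeasurable hf).aestronglyMeasurable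
    (ae_of_all _ fun ω => by
      rw [Real.norm_of_nonneg (truncPow_nonneg _ _)]
      exact truncPow_le_one_add m (f ω))

lemma integrable_max_sub_pow {Ω : Type*} [MeasurableSpace Ω] {μ : Measure Ω}
    [IsFiniteMeasure μ] {X : Ω → ℝ} (hX : AEMeasurable X μ) {m : ℕ}
    (h : Integrable (fun ω => max (-X ω) 0 ^ m) μ) (t : ℝ) :
    Integrable (fun ω => max (t - X ω) 0 ^ m) μ := by
  refine (((integrable_const (max t 0 ^ m)).add h).const_mul (2 ^ (m - 1))).mono'
    (by fun_prop) (ae_of_all _ fun ω => ?_)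
  have hsplit : max (t - X ω) 0 ≤ max t 0 + max (-X ω) 0 :=
    max_le (by linarith [le_max_left t 0, le_max_left (-X ω) 0]) (by positivity)
  rw [Real.norm_of_nonneg (by positivity)]
  exact (pow_le_pow_left₀ (le_max_right _ _) hsplit m).trans
    (add_pow_le (le_max_right _ _) (le_max_right _ _) m)

section RepeatedIntegral

variable {Ω : Type*} [MeasurableSpace Ω] {μ : Measure Ω} {X : Ω → ℝ}

lemma repInt_one_eq_integral_truncPow_zero (hX : Measurable X) (t : ℝ) :
    repInt μ X 1 t = ∫ ω, truncPow 0 (t - X ω) ∂μ := by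
  have hind : (fun ω => truncPow 0 (t - X ω)) = {ω | X ω ≤ t}.indicator 1 := by
    ext ω; simp [truncPow_zero, indicator, sub_nonneg]
  rw [hind, integral_indicator_one (measurableSet_le hX measurable_const)]
  rfl

lemma integral_Iic_integral_truncPow [SFinite μ] (hX : Measurable X) (m : ℕ) (t : ℝ)
    (h : ∀ y, Integrable (fun ω => truncPow m (y - X ω)) μ) :
    ∫ y in Iic t, ∫ ω, truncPow m (y - X ω) ∂μ = ∫ ω, truncPow (m + 1) (t - X ω) ∂μ := by
  have hmeas : ∀ j, Measurable fun p : ℝ × Ω => ENNReal.ofReal (truncPow j (p.1 - X p.2)) :=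
    fun j => ((measurable_truncPow j).comp (by fun_prop)).ennreal_ofReal
  have htoReal : ∀ j y, ∫ ω, truncPow j (y - X ω) ∂μ =
      (∫⁻ ω, ENNReal.ofReal (truncPow j (y - X ω)) ∂μ).toReal := fun j y =>
    integral_eq_lintegral_of_nonneg_ae (ae_of_all _ fun _ => truncPow_nonneg _ _)
      ((measurable_truncPow j).comp (measurable_const.sub hX)).aestronglyMeasurable
  simp_rw [htoReal]
  rw [integral_toReal (hmeas m).lintegral_prod_right'.aemeasurable
      (ae_of_all _ fun y => (h y).lintegral_lt_top),
    lintegral_lintegral_swap (hmeas m).aemeasurable]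
  simp_rw [lintegral_Iic_truncPow_sub]

lemma repInt_succ_eq_integral_truncPow [IsFiniteMeasure μ] (hX : Measurable X) (m : ℕ)
    (h : ∀ t, Integrable (fun ω => truncPow m (t - X ω)) μ) (t : ℝ) :
    repInt μ X (m + 1) t = ∫ ω, truncPow m (t - X ω) ∂μ := by
  induction m generalizing t with
  | zero => exact repInt_one_eq_integral_truncPow_zero hX t
  | succ m ih =>
    have h' : ∀ t, Integrable (fun ω => truncPow m (t - X ω)) μ := fun t =>
      integrable_truncPow_of_succ (by fun_prop) (h t)
    show ∫ y in Iic t, repInt μ X (m + 1) y = _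
    simp_rw [ih h']
    exact integral_Iic_integral_truncPow hX m t h'

lemma repInt_succ_eq_integral_max_sub_pow_div [IsFiniteMeasure μ] (hXm : Measurable X)
    {m : ℕ} (hm : m ≠ 0) (hX : Integrable (fun ω => max (-X ω) 0 ^ m) μ) (t : ℝ) :
    repInt μ X (m + 1) t = (∫ ω, max (t - X ω) 0 ^ m ∂μ) / m ! := by
  have htrunc : ∀ s, (fun ω => truncPow m (s - X ω)) = fun ω => max (s - X ω) 0 ^ m / m ! :=
    fun s => funext fun ω => truncPow_eq_max_pow_div hm _
  have hint : ∀ s, Integrable (fun ω => truncPow m (s - X ω)) μ := fun s => by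
    rw [htrunc]
    exact (integrable_max_sub_pow hXm.aemeasurable hX s).div_const _
  rw [repInt_succ_eq_integral_truncPow hXm m hint t, htrunc, integral_div]

end RepeatedIntegral

lemma pnorm_le_pnorm_iff {Ω : Type*} [MeasurableSpace Ω] (μ : Measure Ω) {p : ℝ} (hp : 0 < p)
    (f g : Ω → ℝ) :
    pnorm μ p f ≤ pnorm μ p g ↔ ∫ ω, |f ω| ^ p ∂μ ≤ ∫ ω, |g ω| ^ p ∂μ :=
  Real.rpow_le_rpow_iff (integral_nonneg fun _ => by positivity)
    (integral_nonneg fun _ => by positivity) (one_div_pos.2 hp)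

/-- `F_X^{(k)}(t) = E[((t−X)₊)^{k−1}]/(k−1)!`, and consequently the comparison of
`k`-th repeated integrals is equivalent to the comparison of the `(k−1)`-norms of the
positive parts. -/
theorem stmt5 {Ω : Type*} [MeasurableSpace Ω] (μ : Measure Ω) [IsProbabilityMeasure μ]
    (k : ℕ) (hk : 2 ≤ k) (X Y : Ω → ℝ) (hXm : Measurable X) (hYm : Measurable Y)
    (hX : Integrable (fun ω => max (-X ω) 0 ^ (k - 1)) μ)
    (hY : Integrable (fun ω => max (-Y ω) 0 ^ (k - 1)) μ) :
    (∀ t : ℝ, repInt μ X k t =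
      (∫ ω, max (t - X ω) 0 ^ (k - 1) ∂μ) / (Nat.factorial (k - 1) : ℝ)) ∧
    ((∀ t : ℝ, repInt μ Y k t ≤ repInt μ X k t) ↔
      ∀ t : ℝ, pnorm μ ((k : ℝ) - 1) (fun ω => max (t - Y ω) 0) ≤
        pnorm μ ((k : ℝ) - 1) (fun ω => max (t - X ω) 0)) := by
  obtain ⟨m, rfl⟩ : ∃ m, k = m + 1 := ⟨k - 1, by omega⟩
  have hm : m ≠ 0 := by omega
  simp only [Nat.add_sub_cancel] at hX hY ⊢
  have hXf := repInt_succ_eq_integral_max_sub_pow_div hXm hm hX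
  have hYf := repInt_succ_eq_integral_max_sub_pow_div hYm hm hY
  have hp : ((m + 1 : ℕ) : ℝ) - 1 = m := by push_cast; ring
  have hnorm : ∀ (Z : Ω → ℝ) (t : ℝ),
      ∫ ω, |max (t - Z ω) 0| ^ (m : ℝ) ∂μ = ∫ ω, max (t - Z ω) 0 ^ m ∂μ := fun Z t => by
    refine integral_congr_ae (ae_of_all _ fun ω => ?_)
    dsimp only
    rw [abs_of_nonneg (le_max_right (t - Z ω) 0), Real.rpow_natCast]
  refine ⟨hXf, ?_⟩
  simp_rw [hp, pnorm_le_pnorm_iff μ (Nat.cast_pos.2 (Nat.pos_of_ne_zero hm)), hnorm, hXf, hYf,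
    div_le_div_iff_of_pos_right (Nat.cast_pos.2 m.factorial_pos : (0 : ℝ) < m !)]
end

section
/- Let (Ω, F, P) be a probability space, p ∈ [1, ∞), Y ∈ L^p(P), and β₀ ∈ (0, 1). Suppose t* ∈ ℝ attains the infimum defining R_{β₀}(Y), and suppose the function β ↦ R_β(Y) is differentiable at β₀. Then its derivative at β₀ equals (R_{β₀}(Y) − t*) / (1 − β₀). -/
open MeasureTheory

/-- The higher-order risk measure `R_β(Y) = inf_t [ t + (1−β)⁻¹ ‖(Y − t)₊‖_p ]`. -/
noncomputable def riskR {Ω : Type*} [MeasurableSpace Ω] (μ : Measure Ω) (p : ℝ) (β : ℝ)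
    (Y : Ω → ℝ) : ℝ :=
  ⨅ t : ℝ, (t + (1 - β)⁻¹ * pnorm μ p (fun ω => max (Y ω - t) 0))

/-!
Every `t` gives an upper envelope `β ↦ t + (1 - β)⁻¹ ‖(Y - t)₊‖_p` of `β ↦ R_β(Y)` on `[0, 1)`,
and the envelope for `t*` touches it at `β₀`. A differentiable function lying below a
differentiable one and touching it at a point has the same derivative there, so the derivative of
`R_·(Y)` at `β₀` is `‖(Y - t*)₊‖_p / (1 - β₀)² = (R_{β₀}(Y) - t*) / (1 - β₀)`.
The infimum defining `R_β(Y)` is a genuine one (not the junk value of an unbounded infimum)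
because every envelope value is at least `E[Y]`.
-/

open Filter Topology

noncomputable def riskObjective {Ω : Type*} [MeasurableSpace Ω] (μ : Measure Ω) (p β : ℝ)
    (Y : Ω → ℝ) (t : ℝ) : ℝ :=
  t + (1 - β)⁻¹ * pnorm μ p (fun ω => max (Y ω - t) 0)

section Norms

variable {Ω : Type*} [MeasurableSpace Ω] {μ : Measure Ω}

theorem pnorm_eq_lpNorm {p : ℝ} (hp : 0 < p) {Z : Ω → ℝ} (hZ : AEStronglyMeasurable Z μ) :
    pnorm μ p Z = lpNorm Z (ENNReal.ofReal p) μ := by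
  rw [lpNorm_eq_integral_norm_rpow_toReal (by simpa using hp) ENNReal.ofReal_ne_top hZ,
    ENNReal.toReal_ofReal hp.le, pnorm, one_div]
  simp only [Real.norm_eq_abs]

theorem lpNorm_le_lpNorm_of_exponent_le [IsProbabilityMeasure μ] {p q : ENNReal} (hpq : p ≤ q)
    {Z : Ω → ℝ} (hZ : MemLp Z q μ) : lpNorm Z p μ ≤ lpNorm Z q μ := by
  rw [← toReal_eLpNorm hZ.1, ← toReal_eLpNorm hZ.1]
  exact ENNReal.toReal_mono (hZ.eLpNorm_ne_top) (eLpNorm_le_eLpNorm_of_exponent_le hpq hZ.1)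

end Norms

section Envelope

variable {Ω : Type*} [MeasurableSpace Ω] {μ : Measure Ω} [IsProbabilityMeasure μ] {p : ℝ}
  {Y : Ω → ℝ}

theorem integral_sub_le_pnorm_posPart (hp : 1 ≤ p) (hY : MemLp Y (ENNReal.ofReal p) μ) (t : ℝ) :
    (∫ ω, Y ω ∂μ) - t ≤ pnorm μ p (fun ω => max (Y ω - t) 0) := by
  have hYt : MemLp (fun ω => Y ω - t) (ENNReal.ofReal p) μ := hY.sub (memLp_const t)
  have hZ : MemLp (fun ω => max (Y ω - t) 0) (ENNReal.ofReal p) μ := hYt.pos_part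
  have hp1 : (1 : ENNReal) ≤ ENNReal.ofReal p := by simpa using ENNReal.ofReal_le_ofReal hp
  have hYt1 : Integrable (fun ω => Y ω - t) μ :=
    memLp_one_iff_integrable.mp (hYt.mono_exponent hp1)
  calc (∫ ω, Y ω ∂μ) - t = ∫ ω, (Y ω - t) ∂μ := by
        rw [integral_sub (memLp_one_iff_integrable.mp (hY.mono_exponent hp1)) (integrable_const t)]
        simp
    _ ≤ ∫ ω, ‖max (Y ω - t) 0‖ ∂μ :=
        integral_mono hYt1 (memLp_one_iff_integrable.mp (hZ.mono_exponent hp1)).norm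
          fun ω => (le_max_left _ _).trans (le_abs_self _)
    _ = lpNorm (fun ω => max (Y ω - t) 0) 1 μ := (lpNorm_one_eq_integral_norm hZ.1).symm
    _ ≤ lpNorm (fun ω => max (Y ω - t) 0) (ENNReal.ofReal p) μ :=
        lpNorm_le_lpNorm_of_exponent_le hp1 hZ
    _ = pnorm μ p (fun ω => max (Y ω - t) 0) := (pnorm_eq_lpNorm (by linarith) hZ.1).symm

theorem integral_le_riskObjective (hp : 1 ≤ p) (hY : MemLp Y (ENNReal.ofReal p) μ) {β : ℝ}
    (hβ : 0 ≤ β) (hβ1 : β < 1) (t : ℝ) : ∫ ω, Y ω ∂μ ≤ riskObjective μ p β Y t := by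
  have hs : 1 ≤ (1 - β)⁻¹ := one_le_inv₀ (by linarith) |>.mpr (by linarith)
  have hc : 0 ≤ pnorm μ p (fun ω => max (Y ω - t) 0) :=
    Real.rpow_nonneg (integral_nonneg fun ω => by positivity) _
  have := integral_sub_le_pnorm_posPart hp hY t
  unfold riskObjective
  nlinarith

theorem riskR_le_riskObjective (hp : 1 ≤ p) (hY : MemLp Y (ENNReal.ofReal p) μ) {β : ℝ}
    (hβ : 0 ≤ β) (hβ1 : β < 1) (t : ℝ) : riskR μ p β Y ≤ riskObjective μ p β Y t :=
  ciInf_le ⟨_, Set.forall_mem_range.mpr (integral_le_riskObjective hp hY hβ hβ1)⟩ t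

end Envelope

theorem hasDerivAt_riskObjective {Ω : Type*} [MeasurableSpace Ω] (μ : Measure Ω) (p : ℝ)
    (Y : Ω → ℝ) (t : ℝ) {β : ℝ} (hβ : β ≠ 1) :
    HasDerivAt (fun β => riskObjective μ p β Y t)
      (pnorm μ p (fun ω => max (Y ω - t) 0) / (1 - β) ^ 2) β := by
  refine (((((hasDerivAt_id β).const_sub 1).inv (sub_ne_zero.mpr hβ.symm)).mul_const
    (pnorm μ p (fun ω => max (Y ω - t) 0))).const_add t).congr_deriv ?_
  simp [div_eq_inv_mul]

theorem deriv_eq_of_eventuallyLE_of_eq {f g : ℝ → ℝ} {x g' : ℝ} (hf : DifferentiableAt ℝ f x)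
    (hg : HasDerivAt g g' x) (hle : f ≤ᶠ[𝓝 x] g) (heq : f x = g x) : deriv f x = g' := by
  have hmax : IsLocalMax (f - g) x :=
    hle.mono fun y hy => by simpa [heq] using sub_nonpos.mpr hy
  have := hmax.deriv_eq_zero
  rw [deriv_sub hf hg.differentiableAt, hg.deriv] at this
  linarith

/-- If `t*` attains the infimum defining `R_{β₀}(Y)` and `β ↦ R_β(Y)` is differentiable
at `β₀`, then its derivative there equals `(R_{β₀}(Y) − t*)/(1 − β₀)`. -/
theorem stmt8 {Ω : Type*} [MeasurableSpace Ω] (μ : Measure Ω) [IsProbabilityMeasure μ]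
    (p : ℝ) (hp : 1 ≤ p) (Y : Ω → ℝ) (hY : MemLp Y (ENNReal.ofReal p) μ)
    (β₀ : ℝ) (hβ₀ : β₀ ∈ Set.Ioo (0 : ℝ) 1) (tstar : ℝ)
    (hmin : riskR μ p β₀ Y = tstar + (1 - β₀)⁻¹ * pnorm μ p (fun ω => max (Y ω - tstar) 0))
    (hdiff : DifferentiableAt ℝ (fun β => riskR μ p β Y) β₀) :
    deriv (fun β => riskR μ p β Y) β₀ = (riskR μ p β₀ Y - tstar) / (1 - β₀) := by
  have hβ₀1 : 1 - β₀ ≠ 0 := sub_ne_zero.mpr hβ₀.2.ne'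
  have hle : (fun β => riskR μ p β Y) ≤ᶠ[𝓝 β₀] fun β => riskObjective μ p β Y tstar :=
    eventually_of_mem (isOpen_Ioo.mem_nhds hβ₀) fun β hβ =>
      riskR_le_riskObjective hp hY hβ.1.le hβ.2 tstar
  rw [deriv_eq_of_eventuallyLE_of_eq hdiff
    (hasDerivAt_riskObjective μ p Y tstar hβ₀.2.ne) hle hmin, hmin]
  field_simp
  ring
end

section
/- Let (Ω, F, P) be a probability space, p ∈ [1, ∞), and X, Y ∈ L^p(P). Then the following are equivalent: (1) ‖(t − X)₊‖_p ≥ ‖(t − Y)₊‖_p for every t ∈ ℝ (i.e., X is stochastically dominated by Y with respect to ‖·‖_p); (2) R_β(−X) ≥ R_β(−Y) for every β ∈ (0, 1). -/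
/-!
Write `g_Z(s) = ‖(s - Z)₊‖_p`. Reindexing the infimum gives
`R_β(-Z) = inf_t [t + (1 - β)⁻¹ g_Z(-t)]`, so domination gives the comparison of risks at once.
Conversely, `g_Y` is convex, nondecreasing, `1`-Lipschitz and tends to `0` at `-∞`, so at any `t`
with `g_Y(t) > 0` it has a supporting line of slope in `(0, 1]`. Flattening that slope a little
costs at most `ε` and makes it `1 - β` for some `β ∈ (0, 1)`; then
`R_β(-Y) ≥ -t + (g_Y(t) - ε) / (1 - β)`, while `R_β(-X) ≤ -t + g_X(t) / (1 - β)` by evaluating the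
infimum at `-t`. Hence `g_Y(t) ≤ g_X(t) + ε` for every `ε > 0`.
-/

open MeasureTheory

open Set Filter Topology

section pnorm

variable {Ω : Type*} [MeasurableSpace Ω] {μ : Measure Ω} {p : ℝ} {f g h : Ω → ℝ}

lemma pnorm_nonneg (μ : Measure Ω) (p : ℝ) (f : Ω → ℝ) : 0 ≤ pnorm μ p f :=
  Real.rpow_nonneg (integral_nonneg fun _ => Real.rpow_nonneg (abs_nonneg _) _) _

lemma MeasureTheory.MemLp.pnorm_eq_toReal_eLpNorm (hp : 0 < p) (hf : MemLp f (ENNReal.ofReal p) μ) :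
    pnorm μ p f = (eLpNorm f (ENNReal.ofReal p) μ).toReal := by
  rw [hf.eLpNorm_eq_integral_rpow_norm (by simpa using hp) ENNReal.ofReal_ne_top,
    ENNReal.toReal_ofReal (by positivity), ENNReal.toReal_ofReal hp.le, pnorm, one_div]
  simp only [Real.norm_eq_abs]

lemma pnorm_le_add (hp : 1 ≤ p) (hf : AEStronglyMeasurable f μ) (hg : MemLp g (ENNReal.ofReal p) μ)
    (hh : MemLp h (ENNReal.ofReal p) μ) (hfgh : ∀ ω, |f ω| ≤ |g ω + h ω|) :
    pnorm μ p f ≤ pnorm μ p g + pnorm μ p h := by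
  have hp0 : 0 < p := zero_lt_one.trans_le hp
  have hgh := hg.add hh
  have hf' : MemLp f (ENNReal.ofReal p) μ := hgh.of_le hf (.of_forall hfgh)
  rw [hf'.pnorm_eq_toReal_eLpNorm hp0, hg.pnorm_eq_toReal_eLpNorm hp0,
    hh.pnorm_eq_toReal_eLpNorm hp0, ← ENNReal.toReal_add hg.eLpNorm_ne_top hh.eLpNorm_ne_top]
  refine ENNReal.toReal_mono (ENNReal.add_ne_top.2 ⟨hg.eLpNorm_ne_top, hh.eLpNorm_ne_top⟩) ?_
  calc eLpNorm f (ENNReal.ofReal p) μ ≤ eLpNorm (g + h) (ENNReal.ofReal p) μ :=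
        eLpNorm_mono fun ω => hfgh ω
    _ ≤ _ := eLpNorm_add_le hg.1 hh.1 (by simpa using hp)

lemma pnorm_const_mul (hp : p ≠ 0) (a : ℝ) (f : Ω → ℝ) :
    pnorm μ p (fun ω => a * f ω) = |a| * pnorm μ p f := by
  simp only [pnorm, abs_mul, Real.mul_rpow (abs_nonneg _) (abs_nonneg _), integral_const_mul]
  rw [Real.mul_rpow (by positivity) (integral_nonneg fun _ => by positivity), one_div,
    Real.rpow_rpow_inv (abs_nonneg _) hp]

lemma pnorm_const [IsProbabilityMeasure μ] (hp : p ≠ 0) (c : ℝ) :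
    pnorm μ p (fun _ => c) = |c| := by
  rw [pnorm, integral_const, probReal_univ, one_smul, one_div, Real.rpow_rpow_inv (abs_nonneg _) hp]

end pnorm

noncomputable def shortfallNorm {Ω : Type*} [MeasurableSpace Ω] (μ : Measure Ω) (p : ℝ)
    (Z : Ω → ℝ) (s : ℝ) : ℝ :=
  pnorm μ p fun ω => max (s - Z ω) 0

section shortfallNorm

variable {Ω : Type*} [MeasurableSpace Ω] {μ : Measure Ω} {p : ℝ} {Z : Ω → ℝ}

lemma shortfallNorm_nonneg (s : ℝ) : 0 ≤ shortfallNorm μ p Z s := pnorm_nonneg _ _ _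

lemma MeasureTheory.MemLp.posPart_const_sub [IsFiniteMeasure μ] {q : ENNReal} (hZ : MemLp Z q μ)
    (s : ℝ) : MemLp (fun ω => max (s - Z ω) 0) q μ :=
  ((memLp_const s).sub hZ).pos_part

lemma tendsto_shortfallNorm_atBot (hp : 0 < p) (hZ : MemLp Z (ENNReal.ofReal p) μ) :
    Tendsto (shortfallNorm μ p Z) atBot (𝓝 0) := by
  have hbound := hZ.integrable_norm_rpow (by simpa using hp) ENNReal.ofReal_ne_top
  rw [ENNReal.toReal_ofReal hp.le] at hbound
  have hint := tendsto_integral_filter_of_dominated_convergence (l := atBot)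
    (F := fun s ω => |max (s - Z ω) 0| ^ p) (f := 0) (fun ω => ‖Z ω‖ ^ p)
    (.of_forall fun s => ((by fun_prop : Measurable fun x : ℝ => |max (s - x) 0| ^ p)
      |>.comp_aemeasurable hZ.1.aemeasurable).aestronglyMeasurable)
    ((eventually_le_atBot 0).mono fun s hs => .of_forall fun ω => by
      rw [Real.norm_eq_abs, abs_of_nonneg (by positivity), Real.norm_eq_abs]
      refine Real.rpow_le_rpow (abs_nonneg _) ?_ hp.le
      rw [abs_of_nonneg (le_max_right _ _)]
      exact max_le (by linarith [neg_le_abs (Z ω)]) (abs_nonneg _))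
    hbound
    (.of_forall fun ω => tendsto_const_nhds.congr' <|
      (eventually_le_atBot (Z ω)).mono fun s hs => by
        dsimp only
        rw [Pi.zero_apply, max_eq_right (by linarith), abs_zero, Real.zero_rpow hp.ne'])
  rw [integral_zero'] at hint
  have h := hint.rpow_const (Or.inr (one_div_pos.2 hp).le)
  rwa [Real.zero_rpow (one_div_pos.2 hp).ne'] at h

variable [IsProbabilityMeasure μ]

lemma monotone_shortfallNorm (hp : 1 ≤ p) (hZ : MemLp Z (ENNReal.ofReal p) μ) :
    Monotone (shortfallNorm μ p Z) := by
  intro s t hst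
  simpa [shortfallNorm, pnorm_const (zero_lt_one.trans_le hp).ne'] using
    pnorm_le_add hp (hZ.posPart_const_sub s).1 (hZ.posPart_const_sub t) (memLp_const 0) fun ω => by
      rw [add_zero, abs_of_nonneg (le_max_right _ _), abs_of_nonneg (le_max_right _ _)]
      exact max_le_max (by linarith) le_rfl

lemma lipschitzWith_shortfallNorm (hp : 1 ≤ p) (hZ : MemLp Z (ENNReal.ofReal p) μ) :
    LipschitzWith 1 (shortfallNorm μ p Z) := by
  refine LipschitzWith.of_le_add fun s t => ?_
  have key := pnorm_le_add hp (hZ.posPart_const_sub s).1 (hZ.posPart_const_sub t)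
    (memLp_const |s - t|) fun ω => by
      have hnn : 0 ≤ max (t - Z ω) 0 + |s - t| := add_nonneg (le_max_right _ _) (abs_nonneg _)
      rw [abs_of_nonneg (le_max_right _ _), abs_of_nonneg hnn]
      exact max_le (by linarith [le_max_left (t - Z ω) 0, le_abs_self (s - t)]) hnn
  simpa [shortfallNorm, Real.dist_eq, pnorm_const (zero_lt_one.trans_le hp).ne'] using key

lemma convexOn_shortfallNorm (hp : 1 ≤ p) (hZ : MemLp Z (ENNReal.ofReal p) μ) :
    ConvexOn ℝ univ (shortfallNorm μ p Z) := by
  refine ⟨convex_univ, fun s _ t _ a b ha hb hab => ?_⟩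
  have hp0 : p ≠ 0 := (zero_lt_one.trans_le hp).ne'
  have key := pnorm_le_add hp (hZ.posPart_const_sub (a * s + b * t)).1
    ((hZ.posPart_const_sub s).const_mul a) ((hZ.posPart_const_sub t).const_mul b)
    fun ω => by
      rw [abs_of_nonneg (le_max_right _ _), abs_of_nonneg (by positivity)]
      refine max_le ?_ (by positivity)
      have hs := mul_le_mul_of_nonneg_left (le_max_left (s - Z ω) 0) ha
      have ht := mul_le_mul_of_nonneg_left (le_max_left (t - Z ω) 0) hb
      linear_combination hs + ht + Z ω * hab
  simpa [shortfallNorm, pnorm_const_mul hp0, abs_of_nonneg ha, abs_of_nonneg hb] using key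

lemma sub_pnorm_le_shortfallNorm (hp : 1 ≤ p) (hZ : MemLp Z (ENNReal.ofReal p) μ) (s : ℝ) :
    s - pnorm μ p Z ≤ shortfallNorm μ p Z s := by
  rcases lt_or_ge s 0 with hs | hs
  · linarith [pnorm_nonneg μ p Z, shortfallNorm_nonneg (μ := μ) (p := p) (Z := Z) s]
  have key := pnorm_le_add hp aestronglyMeasurable_const (hZ.posPart_const_sub s) hZ
    fun ω => by
      rw [abs_of_nonneg hs]
      rcases le_total (Z ω) s with h | h
      · rw [max_eq_left (by linarith)]; simp [le_abs_self]
      · rw [max_eq_right (by linarith), zero_add]; exact h.trans (le_abs_self _)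
  rw [pnorm_const (zero_lt_one.trans_le hp).ne', abs_of_nonneg hs] at key
  unfold shortfallNorm
  linarith

end shortfallNorm

section supporting
variable {g : ℝ → ℝ}

lemma ConvexOn.add_rightDeriv_mul_sub_le (hg : ConvexOn ℝ univ g) (t s : ℝ) :
    g t + derivWithin g (Ioi t) t * (s - t) ≤ g s := by
  rcases lt_trichotomy s t with hst | rfl | hts
  · have h := (hg.slope_le_leftDeriv_of_mem_interior (mem_univ s) (by simp) hst).trans
      (hg.leftDeriv_le_rightDeriv_of_mem_interior (by simp))
    rw [slope_def_field, div_le_iff₀ (sub_pos.2 hst)] at h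
    linarith
  · simp
  · have h := hg.rightDeriv_le_slope_of_mem_interior (by simp) (mem_univ s) hts
    rw [slope_def_field, le_div_iff₀ (sub_pos.2 hts)] at h
    linarith

lemma exists_supporting_slope_mem_Ioc (hconv : ConvexOn ℝ univ g) (hmono : Monotone g)
    (hlip : LipschitzWith 1 g) {s₀ t : ℝ} (hs₀ : g s₀ < g t) :
    ∃ u ∈ Ioc (0 : ℝ) 1, ∀ s, g t + u * (s - t) ≤ g s := by
  set u := derivWithin g (Ioi t) t
  have hsupp := hconv.add_rightDeriv_mul_sub_le t
  refine ⟨u, ⟨?_, ?_⟩, hsupp⟩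
  · have hs₀t : s₀ < t := hmono.reflect_lt hs₀
    by_contra! hu
    nlinarith [hsupp s₀]
  · have h1 : g (t + 1) - g t ≤ 1 := by
      simpa [Real.dist_eq] using (le_abs_self _).trans (hlip.dist_le_mul (t + 1) t)
    linarith [hsupp (t + 1)]

lemma exists_slope_mem_Ioo_of_supporting (hnn : ∀ s, 0 ≤ g s) {t u ε : ℝ}
    (hu : u ∈ Ioc (0 : ℝ) 1) (hε : 0 < ε) (hsupp : ∀ s, g t + u * (s - t) ≤ g s) :
    ∃ v ∈ Ioo (0 : ℝ) 1, ∀ s, g t - ε + v * (s - t) ≤ g s := by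
  obtain ⟨hu0, hu1⟩ := hu
  have hgt := hnn t
  -- Flattening the slope to `(1 - δ) u` only matters where the supporting line is still above `0`,
  -- i.e. for `u (t - s) ≤ g t`, and costs at most `δ g t ≤ ε` there.
  set δ := ε / (2 * ε + g t)
  have hden : 0 < 2 * ε + g t := by linarith
  have hδ0 : 0 < δ := div_pos hε hden
  have hδ1 : δ < 1 := (div_lt_one hden).2 (by linarith)
  have hδg : δ * g t ≤ ε := by
    rw [div_mul_eq_mul_div, div_le_iff₀ hden]
    nlinarith
  refine ⟨(1 - δ) * u, ⟨by nlinarith, by nlinarith⟩, fun s => ?_⟩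
  have h := hsupp s
  rcases le_total t s with hts | hst
  · nlinarith [mul_nonneg (mul_nonneg hδ0.le hu0.le) (sub_nonneg.2 hts)]
  · rcases le_total (u * (t - s)) (g t) with hsmall | hlarge
    · nlinarith [mul_le_mul_of_nonneg_left hsmall hδ0.le]
    · nlinarith [mul_le_mul_of_nonneg_left hlarge (sub_nonneg.2 hδ1.le), hnn s]

end supporting

section riskR
variable {Ω : Type*} [MeasurableSpace Ω] {μ : Measure Ω} {p β : ℝ} {Z : Ω → ℝ}

lemma riskR_neg (μ : Measure Ω) (p β : ℝ) (Z : Ω → ℝ) :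
    riskR μ p β (fun ω => -Z ω) = ⨅ t, t + (1 - β)⁻¹ * shortfallNorm μ p Z (-t) := by
  simp only [riskR, shortfallNorm, neg_sub_comm]

lemma le_riskR_neg (hβ : β < 1) {a t : ℝ}
    (h : ∀ s, a + (1 - β) * (s - t) ≤ shortfallNorm μ p Z s) :
    -t + (1 - β)⁻¹ * a ≤ riskR μ p β (fun ω => -Z ω) := by
  have hβ' : 0 < 1 - β := sub_pos.2 hβ
  rw [riskR_neg]
  refine le_ciInf fun t' => ?_
  calc -t + (1 - β)⁻¹ * a = t' + (1 - β)⁻¹ * (a + (1 - β) * (-t' - t)) := by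
        field_simp
        ring
    _ ≤ t' + (1 - β)⁻¹ * shortfallNorm μ p Z (-t') := by
        gcongr
        exact h (-t')

variable [IsProbabilityMeasure μ]

lemma bddBelow_range_add_mul_shortfallNorm (hp : 1 ≤ p) (hZ : MemLp Z (ENNReal.ofReal p) μ)
    {c : ℝ} (hc : 1 ≤ c) : BddBelow (range fun t => t + c * shortfallNorm μ p Z (-t)) := by
  refine ⟨-pnorm μ p Z, ?_⟩
  rintro _ ⟨t, rfl⟩
  have hg := shortfallNorm_nonneg (μ := μ) (p := p) (Z := Z) (-t)
  nlinarith [sub_pnorm_le_shortfallNorm hp hZ (-t)]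

lemma one_le_inv_one_sub {β : ℝ} (hβ0 : 0 ≤ β) (hβ1 : β < 1) : 1 ≤ (1 - β)⁻¹ :=
  (one_le_inv₀ (sub_pos.2 hβ1)).2 (by linarith)

lemma riskR_neg_le (hp : 1 ≤ p) (hZ : MemLp Z (ENNReal.ofReal p) μ) (hβ0 : 0 ≤ β) (hβ1 : β < 1)
    (t : ℝ) : riskR μ p β (fun ω => -Z ω) ≤ -t + (1 - β)⁻¹ * shortfallNorm μ p Z t := by
  rw [riskR_neg]
  simpa using
    ciInf_le (bddBelow_range_add_mul_shortfallNorm hp hZ (one_le_inv_one_sub hβ0 hβ1)) (-t)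

end riskR

/-- Stochastic dominance with respect to `‖·‖_p` is equivalent to the comparison of the
higher-order risk measures of the negatives at every risk level `β ∈ (0,1)`:
`‖(t−X)₊‖_p ≥ ‖(t−Y)₊‖_p` for all `t` iff `R_β(−X) ≥ R_β(−Y)` for all `β ∈ (0,1)`. -/
theorem stmt11 {Ω : Type*} [MeasurableSpace Ω] (μ : Measure Ω) [IsProbabilityMeasure μ]
    (p : ℝ) (hp : 1 ≤ p) (X Y : Ω → ℝ)
    (hX : MemLp X (ENNReal.ofReal p) μ) (hY : MemLp Y (ENNReal.ofReal p) μ) :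
    (∀ t : ℝ, pnorm μ p (fun ω => max (t - Y ω) 0) ≤ pnorm μ p (fun ω => max (t - X ω) 0)) ↔
      (∀ β ∈ Set.Ioo (0 : ℝ) 1,
        riskR μ p β (fun ω => -Y ω) ≤ riskR μ p β (fun ω => -X ω)) := by
  change (∀ t, shortfallNorm μ p Y t ≤ shortfallNorm μ p X t) ↔ _
  constructor
  · intro h β ⟨hβ0, hβ1⟩
    have hc := one_le_inv_one_sub hβ0.le hβ1
    rw [riskR_neg, riskR_neg]
    exact ciInf_mono (bddBelow_range_add_mul_shortfallNorm hp hY hc) fun t =>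
      add_le_add_right (mul_le_mul_of_nonneg_left (h (-t)) (zero_le_one.trans hc)) t
  · intro h t
    by_contra! hlt
    obtain ⟨s₀, hs₀⟩ := ((tendsto_shortfallNorm_atBot (zero_lt_one.trans_le hp) hY).eventually
      (gt_mem_nhds ((shortfallNorm_nonneg t).trans_lt hlt))).exists
    obtain ⟨u, hu, hsupp⟩ := exists_supporting_slope_mem_Ioc (convexOn_shortfallNorm hp hY)
      (monotone_shortfallNorm hp hY) (lipschitzWith_shortfallNorm hp hY) hs₀
    obtain ⟨v, ⟨hv0, hv1⟩, hv⟩ := exists_slope_mem_Ioo_of_supporting shortfallNorm_nonneg hu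
      (half_pos (sub_pos.2 hlt)) hsupp
    have key := (le_riskR_neg (β := 1 - v) (by linarith) (by simpa using hv)).trans <|
      (h (1 - v) ⟨by linarith, by linarith⟩).trans <|
        riskR_neg_le hp hX (by linarith) (by linarith) t
    rw [sub_sub_cancel, add_le_add_iff_left] at key
    linarith [le_of_mul_le_mul_left key (inv_pos.2 hv0)]
end

section
/- Let (Ω, F, P) be a probability space, let p > 1 be a real number, and let X be a real-valued random variable with E[((−X)₊)^p] < ∞. Then the function G(t) := E[((t − X)₊)^p] is differentiable on ℝ with derivative G′(t) = p · E[((t − X)₊)^{p−1}] for every t ∈ ℝ. -/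
/-!
For fixed `x`, the map `s ↦ ((s - x)₊)^p` is differentiable with derivative `p ((s - x)₊)^(p-1)`,
which is increasing in `s`; on `s < t + 1` it is therefore dominated by `p ((t + 1 - X)₊)^(p-1)`.
This bound is integrable: `(c - X)₊ ≤ c₊ + (-X)₊` puts every shift `(c - X)₊` in `Lᵖ`, and
`Lᵖ ⊆ Lᵖ⁻¹` on a finite measure space. Differentiation under the integral sign concludes.
-/

open MeasureTheory Set

lemma hasDerivAt_max_zero_rpow {p : ℝ} (hp : 1 < p) (y : ℝ) :
    HasDerivAt (fun s : ℝ => max s 0 ^ p) (p * max y 0 ^ (p - 1)) y := by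
  have hIci : ∀ z ∈ Ici (0 : ℝ),
      HasDerivWithinAt (fun s : ℝ => max s 0 ^ p) (p * max z 0 ^ (p - 1)) (Ici 0) z := by
    intro z hz
    rw [max_eq_left hz]
    exact (Real.hasDerivAt_rpow_const (Or.inr hp.le)).hasDerivWithinAt.congr
      (fun s hs => by rw [max_eq_left hs]) (by rw [max_eq_left hz])
  have hIic : ∀ z ∈ Iic (0 : ℝ),
      HasDerivWithinAt (fun s : ℝ => max s 0 ^ p) (p * max z 0 ^ (p - 1)) (Iic 0) z := by
    intro z hz
    have hzero : ∀ s ∈ Iic (0 : ℝ), max s 0 ^ p = 0 := fun s hs => by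
      rw [max_eq_right hs, Real.zero_rpow (by linarith)]
    rw [max_eq_right hz, Real.zero_rpow (by linarith), mul_zero]
    exact (hasDerivWithinAt_const z _ 0).congr hzero (hzero z hz)
  rcases lt_trichotomy y 0 with hy | rfl | hy
  · exact (hIic y hy.le).hasDerivAt (Iic_mem_nhds hy)
  · simpa [Iic_union_Ici] using (hIic 0 self_mem_Iic).union (hIci 0 self_mem_Ici)
  · exact (hIci y hy.le).hasDerivAt (Ici_mem_nhds hy)

lemma integrable_max_sub_rpow {Ω : Type*} [MeasurableSpace Ω] {μ : Measure Ω}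
    [IsFiniteMeasure μ] {p q : ℝ} (hq : 0 < q) (hqp : q ≤ p) {X : Ω → ℝ}
    (hXm : AEMeasurable X μ) (hX : Integrable (fun ω => max (-X ω) 0 ^ p) μ) (c : ℝ) :
    Integrable (fun ω => max (c - X ω) 0 ^ q) μ := by
  have hmeas : ∀ c : ℝ, AEStronglyMeasurable (fun ω => max (c - X ω) 0) μ := fun c =>
    ((aemeasurable_const.sub hXm).max aemeasurable_const).aestronglyMeasurable
  have hiff : ∀ r : ℝ, 0 < r → ∀ c : ℝ, Integrable (fun ω => max (c - X ω) 0 ^ r) μ ↔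
      MemLp (fun ω => max (c - X ω) 0) (ENNReal.ofReal r) μ := fun r hr c => by
    rw [← integrable_norm_rpow_iff (hmeas c) (by simpa) ENNReal.ofReal_ne_top,
      ENNReal.toReal_ofReal hr.le]
    simp_rw [Real.norm_of_nonneg (le_max_right _ _)]
  have h0 := (hiff p (hq.trans_le hqp) 0).1 (by simpa using hX)
  have hc : MemLp (fun ω => max (c - X ω) 0) (ENNReal.ofReal p) μ := by
    refine ((memLp_const (max c 0)).add h0).mono (hmeas c) (ae_of_all _ fun ω => ?_)
    have hle : max (c - X ω) 0 ≤ max c 0 + max (-X ω) 0 := by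
      rw [sub_eq_add_neg]
      exact max_le (add_le_add (le_max_left _ _) (le_max_left _ _)) (by positivity)
    rw [Pi.add_apply, zero_sub, Real.norm_of_nonneg (le_max_right _ _),
      Real.norm_of_nonneg (by positivity)]
    exact hle
  exact (hiff q hq c).2 (hc.mono_exponent (ENNReal.ofReal_le_ofReal hqp))

/-- For real `p > 1` and `X` with `E[((−X)₊)^p] < ∞`, the function
`G(t) = E[((t − X)₊)^p]` is differentiable with `G′(t) = p · E[((t − X)₊)^{p−1}]`. -/
theorem stmt14 {Ω : Type*} [MeasurableSpace Ω] (μ : Measure Ω) [IsProbabilityMeasure μ]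
    (p : ℝ) (hp : 1 < p) (X : Ω → ℝ) (hXm : Measurable X)
    (hX : Integrable (fun ω => max (-X ω) 0 ^ p) μ) :
    ∀ t : ℝ, HasDerivAt (fun s : ℝ => ∫ ω, max (s - X ω) 0 ^ p ∂μ)
      (p * ∫ ω, max (t - X ω) 0 ^ (p - 1) ∂μ) t := by
  intro t
  have hmeas : ∀ s q : ℝ, AEStronglyMeasurable (fun ω => max (s - X ω) 0 ^ q) μ := fun s q =>
    (((measurable_const.sub hXm).max measurable_const).pow_const q).aestronglyMeasurable
  have hderiv : ∀ x s : ℝ,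
      HasDerivAt (fun s => max (s - x) 0 ^ p) (p * max (s - x) 0 ^ (p - 1)) s := fun x s =>
    (hasDerivAt_max_zero_rpow hp (s - x)).comp_sub_const s x
  have hbound : ∀ ω, ∀ s ∈ Iio (t + 1),
      ‖p * max (s - X ω) 0 ^ (p - 1)‖ ≤ p * max (t + 1 - X ω) 0 ^ (p - 1) := by
    intro ω s hs
    rw [Real.norm_of_nonneg (by positivity)]
    gcongr
    exact hs.le
  obtain ⟨-, h⟩ := hasDerivAt_integral_of_dominated_loc_of_deriv_le
    (Iio_mem_nhds (lt_add_one t)) (Filter.Eventually.of_forall fun s => hmeas s p)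
    (integrable_max_sub_rpow (by linarith) le_rfl hXm.aemeasurable hX t)
    ((hmeas t (p - 1)).const_mul p) (ae_of_all _ hbound)
    ((integrable_max_sub_rpow (by linarith) (by linarith) hXm.aemeasurable hX (t + 1)).const_mul p)
    (ae_of_all _ fun ω s _ => hderiv (X ω) s)
  simpa only [integral_const_mul] using h
end
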